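/- arXiv:1212.4939 — 5 statements merged into one kernel-verified Lean document; each statement's English description precedes it below -/
import Mathlib

section
/- Let λ∈ℝ, p∈ℕ₀ and f(y)=λ|y|^{2p}y. For z₊,z₋∈ℂ define the averaged nonlinearities f₊(z₊,z₋)=(1/2π)∫₀^{2π} f(z₊+e^{iθ}·conj(z₋)) dθ and f₋(z₊,z₋)=(1/2π)∫₀^{2π} f(z₋+e^{iθ}·conj(z₊)) dθ. Then f₊(z₊,z₋)=G(|z₊|²,|z₋|²)·z₊ and f₋(z₊,z₋)=G(|z₋|²,|z₊|²)·z₋, where G is the real polynomial G(ρ,σ) = λ[ Σ_{0≤j≤⌊p/2⌋} (p!/(j!·j!·(p−2j)!)) (ρ+σ)^{p−2j}(ρσ)^j + σ·Σ_{0≤j≤⌊(p−1)/2⌋} (p!/(j!·(j+1)!·(p−2j−1)!)) (ρ+σ)^{p−2j−1}(ρσ)^j ]. In particular f₊(z₊,z₋)·conj(z₊) and f₋(z₊,z₋)·conj(z₋) are real. -/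
open Complex

/-- The averaged nonlinearity f₊(z₊,z₋) = (1/2π)∫₀^{2π} f(z₊ + e^{iθ}·conj(z₋)) dθ. -/
noncomputable def fplus (f : ℂ → ℂ) (zp zm : ℂ) : ℂ :=
  (1 / (2 * (Real.pi : ℂ))) *
    ∫ θ in (0:ℝ)..(2*Real.pi), f (zp + Complex.exp (Complex.I * (θ:ℂ)) * (starRingEnd ℂ) zm)

/-- The averaged nonlinearity f₋(z₊,z₋) = (1/2π)∫₀^{2π} f(z₋ + e^{iθ}·conj(z₊)) dθ. -/
noncomputable def fminus (f : ℂ → ℂ) (zp zm : ℂ) : ℂ :=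
  (1 / (2 * (Real.pi : ℂ))) *
    ∫ θ in (0:ℝ)..(2*Real.pi), f (zm + Complex.exp (Complex.I * (θ:ℂ)) * (starRingEnd ℂ) zp)

/-- The explicit real polynomial G(ρ,σ) of STATEMENT 1. -/
noncomputable def Gpoly (lam : ℝ) (p : ℕ) (ρ σ : ℝ) : ℝ :=
  lam * ((∑ j ∈ Finset.range (p/2 + 1),
      ((p.factorial : ℝ) / ((j.factorial : ℝ) * (j.factorial : ℝ) * ((p - 2*j).factorial : ℝ)))
        * (ρ + σ)^(p - 2*j) * (ρ*σ)^j)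
    + σ * ∑ j ∈ Finset.range ((p+1)/2),
      ((p.factorial : ℝ) / ((j.factorial : ℝ) * ((j+1).factorial : ℝ) * ((p - 2*j - 1).factorial : ℝ)))
        * (ρ + σ)^(p - 2*j - 1) * (ρ*σ)^j)

/- ### Auxiliary material -/

section Aux

open Finset intervalIntegral

lemma circInt (n : ℤ) : ∫ θ in (0:ℝ)..(2*Real.pi), Complex.exp (Complex.I * θ * n) =
    if n = 0 then (2*Real.pi : ℂ) else 0 := by
  split_ifs with h
  · subst h; simp
  · have hc : (n : ℂ) * Complex.I ≠ 0 := by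
      simp [Complex.I_ne_zero]
      exact_mod_cast h
    have key := integral_exp_mul_complex (a := (0:ℝ)) (b := 2*Real.pi) hc
    rw [show (fun θ : ℝ => Complex.exp (Complex.I * θ * n)) = fun θ : ℝ => Complex.exp ((n * Complex.I) * θ) by funext θ; ring_nf]
    rw [key]
    have h1 : Complex.exp ((n:ℂ) * Complex.I * ((2*Real.pi:ℝ):ℂ)) = 1 := by
      rw [show ((n:ℂ) * Complex.I * ((2*Real.pi:ℝ):ℂ)) = n * (2 * (Real.pi:ℂ) * Complex.I) by push_cast; ring]
      exact Complex.exp_int_mul_two_pi_mul_I n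
    push_cast at h1 ⊢
    rw [h1]
    simp

lemma circInt2 (a b : ℕ) : ∫ θ in (0:ℝ)..(2*Real.pi),
    (Complex.exp (Complex.I * θ))^a * (Complex.exp (-(Complex.I * θ)))^b =
    if a = b then (2*Real.pi : ℂ) else 0 := by
  have : ∀ θ : ℝ, (Complex.exp (Complex.I * θ))^a * (Complex.exp (-(Complex.I * θ)))^b
      = Complex.exp (Complex.I * θ * ((a:ℤ) - (b:ℤ) : ℤ)) := by
    intro θ
    rw [← Complex.exp_nat_mul, ← Complex.exp_nat_mul, ← Complex.exp_add]
    congr 1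
    push_cast
    ring
  simp only [this]
  rw [circInt]
  have : ((a:ℤ) - b = 0) ↔ (a = b) := by omega
  simp [this]

lemma sumEvenOdd {M : Type*} [AddCommMonoid M] (Z W : ℕ → M) (n : ℕ) :
    ∑ j ∈ Finset.range n, (if Even j then Z (j/2) else W (j/2)) =
    (∑ m ∈ Finset.range ((n+1)/2), Z m) + ∑ m ∈ Finset.range (n/2), W m := by
  induction n with
  | zero => simp
  | succ n ih =>
    rw [Finset.sum_range_succ, ih]
    rcases Nat.even_or_odd n with h | h
    · obtain ⟨m, rfl⟩ := h
      rw [if_pos (by exact ⟨m, rfl⟩),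
        show (m + m + 1 + 1)/2 = m + 1 by omega,
        show (m + m + 1)/2 = m by omega,
        show (m + m)/2 = m by omega,
        Finset.sum_range_succ]
      abel
    · obtain ⟨m, rfl⟩ := h
      rw [if_neg (by simp [Nat.even_add_one, parity_simps]),
        show (2*m + 1 + 1 + 1)/2 = m + 1 by omega,
        show (2*m + 1 + 1)/2 = m + 1 by omega,
        show (2*m + 1)/2 = m by omega,
        Finset.sum_range_succ, Finset.sum_range_succ]
      abel

lemma coeff1 (p m : ℕ) (h : 2*m ≤ p) :
    (p.factorial : ℝ) / ((m.factorial : ℝ) * (m.factorial : ℝ) * ((p - 2*m).factorial : ℝ))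
      = ((p.choose (2*m) * (2*m).choose m : ℕ) : ℝ) := by
  have h1 := Nat.choose_mul_factorial_mul_factorial h
  have h2 := Nat.choose_mul_factorial_mul_factorial (show m ≤ 2*m by omega)
  rw [show 2*m - m = m by omega] at h2
  rw [div_eq_iff (by positivity)]
  push_cast [← h1, ← h2]
  ring

lemma coeff2 (p m : ℕ) (h : 2*m + 1 ≤ p) :
    (p.factorial : ℝ) / ((m.factorial : ℝ) * ((m+1).factorial : ℝ) * ((p - 2*m - 1).factorial : ℝ))
      = ((p.choose (2*m+1) * (2*m+1).choose (m+1) : ℕ) : ℝ) := by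
  have h1 := Nat.choose_mul_factorial_mul_factorial h
  have h2 := Nat.choose_mul_factorial_mul_factorial (show m+1 ≤ 2*m+1 by omega)
  rw [show 2*m+1 - (m+1) = m by omega] at h2
  rw [show p - 2*m - 1 = p - (2*m+1) by omega, div_eq_iff (by positivity)]
  push_cast [← h1, ← h2]
  ring

noncomputable def cJI (p : ℕ) (z w : ℂ) (j i : ℕ) : ℂ :=
  (p.choose j : ℂ) * (j.choose i : ℂ) * ((‖z‖^2 + ‖w‖^2 : ℝ) : ℂ)^(p-j)
    * (z*w)^i * ((starRingEnd ℂ) (z*w))^(j-i)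

noncomputable def termJI (lam : ℝ) (p : ℕ) (z w : ℂ) (j i : ℕ) (θ : ℝ) : ℂ :=
  cJI p z w j i * (Complex.exp (Complex.I * θ))^(j-i) * (Complex.exp (-(Complex.I * θ)))^i
    * ((lam : ℂ) * (z + Complex.exp (Complex.I * θ) * (starRingEnd ℂ) w))

noncomputable def Zc (lam : ℝ) (p : ℕ) (z w : ℂ) (m : ℕ) : ℂ :=
  (cJI p z w (2*m) m * lam * z) * (2*Real.pi:ℂ)

noncomputable def Wc (lam : ℝ) (p : ℕ) (z w : ℂ) (m : ℕ) : ℂ :=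
  (cJI p z w (2*m+1) (m+1) * lam * (starRingEnd ℂ) w) * (2*Real.pi:ℂ)

lemma mulconj (z : ℂ) : z * (starRingEnd ℂ) z = ((‖z‖^2 : ℝ) : ℂ) := by
  rw [Complex.mul_conj]
  norm_cast
  rw [Complex.sq_norm]

lemma expandPoint (lam : ℝ) (p : ℕ) (z w : ℂ) (θ : ℝ) :
    (lam : ℂ) * ((‖z + Complex.exp (Complex.I * θ) * (starRingEnd ℂ) w‖ : ℝ) : ℂ)^(2*p)
      * (z + Complex.exp (Complex.I * θ) * (starRingEnd ℂ) w)
    = ∑ j ∈ Finset.range (p+1), ∑ i ∈ Finset.range (j+1), termJI lam p z w j i θ := by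
  set E := Complex.exp (Complex.I * θ) with hE
  set F := Complex.exp (-(Complex.I * θ)) with hF
  set y := z + E * (starRingEnd ℂ) w with hy
  have hEF : E * F = 1 := by rw [hE, hF, ← Complex.exp_add]; simp
  have hconjE : (starRingEnd ℂ) E = F := by
    rw [hE, hF, ← Complex.exp_conj]
    congr 1
    simp [Complex.conj_I]
  have hnorm : ((‖y‖ : ℝ) : ℂ)^(2*p) = (y * (starRingEnd ℂ) y)^p := by
    rw [mulconj, pow_mul]
    norm_cast
  have hyy : y * (starRingEnd ℂ) y
      = ((z*w) * F + (starRingEnd ℂ) (z*w) * E) + ((‖z‖^2 + ‖w‖^2 : ℝ) : ℂ) := by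
    have hz := mulconj z
    have hw := mulconj w
    have hcc : (starRingEnd ℂ) y = (starRingEnd ℂ) z + F * w := by
      rw [hy]; simp [map_add, map_mul, hconjE]
    rw [hcc, hy]
    have expand : (z + E * (starRingEnd ℂ) w) * ((starRingEnd ℂ) z + F * w)
        = z * (starRingEnd ℂ) z + (E*F) * ((starRingEnd ℂ) w * w)
          + (z*w) * F + ((starRingEnd ℂ) z * (starRingEnd ℂ) w) * E := by ring
    rw [expand, hz, hEF, one_mul, show (starRingEnd ℂ) w * w = w * (starRingEnd ℂ) w by ring, hw]
    push_cast
    simp [map_mul]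
    ring
  rw [hnorm, hyy, add_pow]
  rw [show (lam:ℂ) * (∑ j ∈ Finset.range (p+1), ((z*w) * F + (starRingEnd ℂ) (z*w) * E)^j
      * ((‖z‖^2 + ‖w‖^2 : ℝ) : ℂ)^(p-j) * (p.choose j : ℂ)) * y
    = ∑ j ∈ Finset.range (p+1), ((z*w) * F + (starRingEnd ℂ) (z*w) * E)^j
      * ((‖z‖^2 + ‖w‖^2 : ℝ) : ℂ)^(p-j) * (p.choose j : ℂ) * ((lam:ℂ) * y) by
    rw [Finset.mul_sum, Finset.sum_mul]; apply Finset.sum_congr rfl; intros; ring]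
  apply Finset.sum_congr rfl
  intro j _
  rw [add_pow, Finset.sum_mul, Finset.sum_mul, Finset.sum_mul]
  apply Finset.sum_congr rfl
  intro i _
  unfold termJI cJI
  rw [mul_pow, mul_pow]
  ring

lemma contE : Continuous (fun θ : ℝ => Complex.exp (Complex.I * θ)) := by fun_prop

lemma contTerm (lam : ℝ) (p : ℕ) (z w : ℂ) (j i : ℕ) : Continuous (termJI lam p z w j i) := by
  unfold termJI
  fun_prop

lemma intTerm (lam : ℝ) (p : ℕ) (z w : ℂ) (j i : ℕ) :
    ∫ θ in (0:ℝ)..(2*Real.pi), termJI lam p z w j i θ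
    = (cJI p z w j i * lam * z) * (if j - i = i then (2*Real.pi:ℂ) else 0)
      + (cJI p z w j i * lam * (starRingEnd ℂ) w) * (if j - i + 1 = i then (2*Real.pi:ℂ) else 0) := by
  have hpt : ∀ θ : ℝ, termJI lam p z w j i θ
      = (cJI p z w j i * lam * z) * ((Complex.exp (Complex.I * θ))^(j-i) * (Complex.exp (-(Complex.I * θ)))^i)
        + (cJI p z w j i * lam * (starRingEnd ℂ) w) * ((Complex.exp (Complex.I * θ))^(j-i+1) * (Complex.exp (-(Complex.I * θ)))^i) := by
    intro θ
    unfold termJI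
    rw [pow_succ]
    ring
  rw [intervalIntegral.integral_congr (g := fun θ => _) (fun θ _ => hpt θ)]
  rw [intervalIntegral.integral_add, intervalIntegral.integral_const_mul, intervalIntegral.integral_const_mul,
    circInt2, circInt2]
  · exact ((continuous_const.mul ((contE.pow _).mul ((Complex.continuous_exp.comp (by fun_prop)).pow _)))).intervalIntegrable _ _
  · exact ((continuous_const.mul ((contE.pow _).mul ((Complex.continuous_exp.comp (by fun_prop)).pow _)))).intervalIntegrable _ _

lemma innerSum (lam : ℝ) (p : ℕ) (z w : ℂ) (j : ℕ) :
    ∑ i ∈ Finset.range (j+1),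
      ((cJI p z w j i * lam * z) * (if j - i = i then (2*Real.pi:ℂ) else 0)
        + (cJI p z w j i * lam * (starRingEnd ℂ) w) * (if j - i + 1 = i then (2*Real.pi:ℂ) else 0))
    = if Even j then Zc lam p z w (j/2) else Wc lam p z w (j/2) := by
  rcases Nat.even_or_odd j with ⟨m, rfl⟩ | ⟨m, rfl⟩
  · rw [if_pos ⟨m, rfl⟩, show (m+m)/2 = m by omega, show m + m = 2*m by omega]
    rw [Finset.sum_eq_single_of_mem m (by simp [Finset.mem_range]; omega)]
    · rw [if_pos (by omega), if_neg (by omega), mul_zero, add_zero]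
      rfl
    · intro i hi hne
      simp only [Finset.mem_range] at hi
      rw [if_neg (by omega), if_neg (by omega), mul_zero, mul_zero, add_zero]
  · rw [if_neg (by simp [Nat.even_add_one, parity_simps]), show (2*m+1)/2 = m by omega]
    rw [Finset.sum_eq_single_of_mem (m+1) (by simp [Finset.mem_range]; omega)]
    · rw [if_neg (by omega), if_pos (by omega), mul_zero, zero_add]
      rfl
    · intro i hi hne
      simp only [Finset.mem_range] at hi
      rw [if_neg (by omega), if_neg (by omega), mul_zero, mul_zero, add_zero]

lemma mulconjPow (z w : ℂ) (m : ℕ) :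
    (z*w)^m * ((starRingEnd ℂ) (z*w))^m = (((‖z‖^2 * ‖w‖^2)^m : ℝ) : ℂ) := by
  rw [← mul_pow, mulconj (z*w)]
  norm_cast
  rw [norm_mul, mul_pow]

lemma hZval (lam : ℝ) (p : ℕ) (z w : ℂ) (m : ℕ) (h : 2*m ≤ p) :
    Zc lam p z w m = (2*Real.pi:ℂ) * (lam:ℝ)
      * ((((p.factorial : ℝ) / ((m.factorial : ℝ) * (m.factorial : ℝ) * ((p - 2*m).factorial : ℝ)))
        * (‖z‖^2 + ‖w‖^2)^(p - 2*m) * ((‖z‖^2*‖w‖^2))^m : ℝ) : ℂ) * z := by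
  unfold Zc cJI
  rw [show 2*m - m = m by omega, mul_assoc ((p.choose (2*m):ℂ) * _ * _) ((z*w)^m), mulconjPow,
    coeff1 p m h]
  push_cast
  ring

lemma hWval (lam : ℝ) (p : ℕ) (z w : ℂ) (m : ℕ) (h : 2*m + 1 ≤ p) :
    Wc lam p z w m = (2*Real.pi:ℂ) * (lam:ℝ) * ((‖w‖^2 : ℝ) : ℂ)
      * ((((p.factorial : ℝ) / ((m.factorial : ℝ) * ((m+1).factorial : ℝ) * ((p - 2*m - 1).factorial : ℝ)))
        * (‖z‖^2 + ‖w‖^2)^(p - 2*m - 1) * ((‖z‖^2*‖w‖^2))^m : ℝ) : ℂ) * z := by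
  unfold Wc cJI
  have hw := mulconj w
  rw [show 2*m+1 - (m+1) = m by omega, show p - (2*m+1) = p - 2*m - 1 by omega,
    pow_succ (z*w) m]
  rw [coeff2 p m h]
  have key : (z*w)^m * (z*w) * ((starRingEnd ℂ) (z*w))^m
      = (((‖z‖^2 * ‖w‖^2)^m : ℝ) : ℂ) * (z*w) := by
    rw [mul_right_comm, mulconjPow]
  have hww : w * (starRingEnd ℂ) w = ((‖w‖^2 : ℝ) : ℂ) := mulconj w
  push_cast at key hww ⊢
  linear_combination ((p.choose (2*m+1) : ℂ)) * (((2*m+1).choose (m+1) : ℂ))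
      * ((‖z‖:ℂ)^2 + (‖w‖:ℂ)^2)^(p-2*m-1) * (lam:ℂ) * ((starRingEnd ℂ) w) * (2*Real.pi:ℂ) * key
    + ((p.choose (2*m+1) : ℂ)) * (((2*m+1).choose (m+1) : ℂ))
      * ((‖z‖:ℂ)^2 + (‖w‖:ℂ)^2)^(p-2*m-1) * ((‖z‖:ℂ)^(2*m)*(‖w‖:ℂ)^(2*m)) * (lam:ℂ) * (2*Real.pi:ℂ) * z * hww

lemma fplus_formula (lam : ℝ) (p : ℕ) (f : ℂ → ℂ)
    (hf : ∀ y : ℂ, f y = (lam : ℂ) * (‖y‖ : ℂ)^(2*p) * y) (z w : ℂ) :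
    fplus f z w = ((Gpoly lam p (‖z‖^2) (‖w‖^2) : ℝ) : ℂ) * z := by
  unfold fplus
  have h1 : (∫ θ in (0:ℝ)..(2*Real.pi), f (z + Complex.exp (Complex.I * (θ:ℂ)) * (starRingEnd ℂ) w))
      = ∫ θ in (0:ℝ)..(2*Real.pi), ∑ j ∈ Finset.range (p+1), ∑ i ∈ Finset.range (j+1),
          termJI lam p z w j i θ := by
    apply intervalIntegral.integral_congr
    intro θ _
    show f (z + Complex.exp (Complex.I * (θ:ℂ)) * (starRingEnd ℂ) w) = _
    rw [hf]
    exact expandPoint lam p z w θ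
  rw [h1, intervalIntegral.integral_finset_sum (fun j _ =>
    (Continuous.intervalIntegrable (continuous_finset_sum _ (fun i _ => contTerm lam p z w j i)) _ _))]
  rw [Finset.sum_congr rfl (fun j _ => intervalIntegral.integral_finset_sum
    (fun i _ => (contTerm lam p z w j i).intervalIntegrable _ _))]
  rw [Finset.sum_congr rfl (fun j _ => Finset.sum_congr rfl (fun i _ => intTerm lam p z w j i))]
  rw [Finset.sum_congr rfl (fun j _ => innerSum lam p z w j)]
  rw [sumEvenOdd (Zc lam p z w) (Wc lam p z w) (p+1),
    show (p+1+1)/2 = p/2 + 1 by omega]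
  have hZs : ∑ m ∈ Finset.range (p/2+1), Zc lam p z w m
      = (2*Real.pi:ℂ) * (lam:ℝ) * ((∑ m ∈ Finset.range (p/2+1),
          (((p.factorial : ℝ) / ((m.factorial : ℝ) * (m.factorial : ℝ) * ((p - 2*m).factorial : ℝ)))
          * (‖z‖^2 + ‖w‖^2)^(p - 2*m) * ((‖z‖^2*‖w‖^2))^m) : ℝ) : ℂ) * z := by
    rw [Finset.sum_congr rfl (fun m hm => hZval lam p z w m
      (by simp only [Finset.mem_range] at hm; omega))]
    rw [← Finset.sum_mul, ← Finset.mul_sum]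
    norm_cast
  have hWs : ∑ m ∈ Finset.range ((p+1)/2), Wc lam p z w m
      = (2*Real.pi:ℂ) * (lam:ℝ) * ((‖w‖^2 : ℝ) : ℂ) * ((∑ m ∈ Finset.range ((p+1)/2),
          (((p.factorial : ℝ) / ((m.factorial : ℝ) * ((m+1).factorial : ℝ) * ((p - 2*m - 1).factorial : ℝ)))
          * (‖z‖^2 + ‖w‖^2)^(p - 2*m - 1) * ((‖z‖^2*‖w‖^2))^m) : ℝ) : ℂ) * z := by
    rw [Finset.sum_congr rfl (fun m hm => hWval lam p z w m
      (by simp only [Finset.mem_range] at hm; omega))]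
    rw [← Finset.sum_mul, ← Finset.mul_sum]
    norm_cast
  rw [hZs, hWs]
  unfold Gpoly
  have hpi : (2*(Real.pi:ℂ)) ≠ 0 := by
    simp [Real.pi_ne_zero]
  push_cast
  field_simp

/-- for the pure power nonlinearity f(y) = λ|y|^{2p}y, the averaged
  nonlinearities are f₊(z₊,z₋) = G(|z₊|²,|z₋|²)z₊ and f₋(z₊,z₋) = G(|z₋|²,|z₊|²)z₋
  with G the explicit real polynomial `Gpoly`; in particular f₊·conj z₊ and f₋·conj z₋
  are real. -/
theorem averaged_nonlinearity_formula
    (lam : ℝ) (p : ℕ)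
    (f : ℂ → ℂ) (hf : ∀ y : ℂ, f y = (lam : ℂ) * (‖y‖ : ℂ)^(2*p) * y) :
    ∀ zp zm : ℂ,
      fplus f zp zm = ((Gpoly lam p (‖zp‖^2) (‖zm‖^2) : ℝ) : ℂ) * zp ∧
      fminus f zp zm = ((Gpoly lam p (‖zm‖^2) (‖zp‖^2) : ℝ) : ℂ) * zm ∧
      (fplus f zp zm * (starRingEnd ℂ) zp).im = 0 ∧
      (fminus f zp zm * (starRingEnd ℂ) zm).im = 0 := by
  intro zp zm
  have hm : fminus f zp zm = fplus f zm zp := rfl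
  have h1 := fplus_formula lam p f hf zp zm
  have h2 := fplus_formula lam p f hf zm zp
  refine ⟨h1, hm ▸ h2, ?_, ?_⟩
  · rw [h1, mul_assoc, mulconj]
    rw [← Complex.ofReal_mul]
    exact Complex.ofReal_im _
  · rw [hm, h2, mul_assoc, mulconj]
    rw [← Complex.ofReal_mul]
    exact Complex.ofReal_im _

end Aux
end

section
/- Let 0<ε≤1, α≥0, let f:ℂ→ℂ be continuous, and define the averaged nonlinearities f₊(z₊,z₋)=(1/2π)∫₀^{2π} f(z₊+e^{iθ}·conj(z₋))dθ and f₋(z₊,z₋)=(1/2π)∫₀^{2π} f(z₋+e^{iθ}·conj(z₊))dθ, and the remainder nonlinearity f_r(z₊,z₋,r;s) = f(e^{is/ε²}z₊+e^{−is/ε²}·conj(z₋)+r) − f₊(z₊,z₋)e^{is/ε²} − conj(f₋(z₊,z₋))e^{−is/ε²}. Suppose z₊,z₋,r∈C²([0,τ],ℂ) satisfy the frequency-decomposed (MDF) system: 2i·z_±'(s) + ε²·z_±''(s) + α·z_±(s) + f_±(z₊(s),z₋(s)) = 0 and ε²·r''(s) + (α+1/ε²)·r(s) + f_r(z₊(s),z₋(s),r(s);s)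 = 0 for 0≤s≤τ. Then the reconstruction y(s) := e^{is/ε²}z₊(s) + e^{−is/ε²}·conj(z₋(s)) + r(s) satisfies ε²y''(s) + (α+1/ε²)y(s) + f(y(s)) = 0 for all s∈[0,τ]. Moreover, if the initial data are chosen as z₊(0)=(φ₁−iφ₂)/2, z₋(0)=(conj(φ₁)−i·conj(φ₂))/2, r(0)=0 and r'(0)=−z₊'(0)−conj(z₋'(0)), then y(0)=φ₁ and y'(0)=φ₂/ε². -/
open Complex

/-- The remainder nonlinearity
  f_r(z₊,z₋,r;s) = f(e^{is/ε²}z₊ + e^{−is/ε²}conj(z₋) + r)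
    − f₊(z₊,z₋)e^{is/ε²} − conj(f₋(z₊,z₋))e^{−is/ε²}. -/
noncomputable def frem (f : ℂ → ℂ) (ε : ℝ) (zp zm r : ℂ) (s : ℝ) : ℂ :=
  f (Complex.exp (Complex.I * (s:ℂ) / (ε:ℂ)^2) * zp
      + Complex.exp (-(Complex.I * (s:ℂ)) / (ε:ℂ)^2) * (starRingEnd ℂ) zm + r)
    - fplus f zp zm * Complex.exp (Complex.I * (s:ℂ) / (ε:ℂ)^2)
    - (starRingEnd ℂ) (fminus f zp zm) * Complex.exp (-(Complex.I * (s:ℂ)) / (ε:ℂ)^2)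

lemma hasDerivAt_cexp_mul (a : ℂ) (s : ℝ) :
    HasDerivAt (fun t : ℝ => Complex.exp (a * t)) (a * Complex.exp (a * s)) s := by
  have h : HasDerivAt (fun t : ℝ => a * (t : ℂ)) a s := by
    simpa using (Complex.ofRealCLM.hasDerivAt (x := s)).const_mul a
  simpa [mul_comm] using h.cexp

lemma deriv_differentiable_of_contDiff2 (g : ℝ → ℂ) (hg : ContDiff ℝ 2 g) :
    Differentiable ℝ (deriv g) := by
  have h2 : ContDiff ℝ ((1:ℕ∞)+1) g := by norm_num; exact hg
  exact ((contDiff_succ_iff_deriv.mp h2).2.2).differentiable (by simp)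

/-- consistency of the multiscale decomposition by frequency (MDF):
  if (z₊,z₋,r) solve the MDF system then the reconstruction
  y(s) = e^{is/ε²}z₊(s) + e^{−is/ε²}conj(z₋(s)) + r(s) solves the original problem,
  and the decomposed initial data reproduce y(0)=φ₁, y'(0)=φ₂/ε². -/
theorem mdf_reconstruction
    (ε α τ : ℝ) (hε : 0 < ε) (hε1 : ε ≤ 1) (hα : 0 ≤ α) (hτ : 0 ≤ τ)
    (f : ℂ → ℂ) (hf : Continuous f)
    (zp zm r : ℝ → ℂ)
    (hzp : ContDiff ℝ 2 zp) (hzm : ContDiff ℝ 2 zm) (hr : ContDiff ℝ 2 r)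
    (hodep : ∀ s ∈ Set.Icc (0:ℝ) τ,
      2 * Complex.I * deriv zp s + (ε:ℂ)^2 * deriv (deriv zp) s + (α:ℂ) * zp s
        + fplus f (zp s) (zm s) = 0)
    (hodem : ∀ s ∈ Set.Icc (0:ℝ) τ,
      2 * Complex.I * deriv zm s + (ε:ℂ)^2 * deriv (deriv zm) s + (α:ℂ) * zm s
        + fminus f (zp s) (zm s) = 0)
    (hoder : ∀ s ∈ Set.Icc (0:ℝ) τ,
      (ε:ℂ)^2 * deriv (deriv r) s + ((α:ℂ) + 1/(ε:ℂ)^2) * r s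
        + frem f ε (zp s) (zm s) (r s) s = 0)
    (φ₁ φ₂ : ℂ) :
    let y : ℝ → ℂ := fun s =>
      Complex.exp (Complex.I * (s:ℂ) / (ε:ℂ)^2) * zp s
        + Complex.exp (-(Complex.I * (s:ℂ)) / (ε:ℂ)^2) * (starRingEnd ℂ) (zm s) + r s
    (∀ s ∈ Set.Icc (0:ℝ) τ,
      (ε:ℂ)^2 * deriv (deriv y) s + ((α:ℂ) + 1/(ε:ℂ)^2) * y s + f (y s) = 0) ∧
    ((zp 0 = (φ₁ - Complex.I * φ₂) / 2 ∧
      zm 0 = ((starRingEnd ℂ) φ₁ - Complex.I * (starRingEnd ℂ) φ₂) / 2 ∧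
      r 0 = 0 ∧
      deriv r 0 = -(deriv zp 0) - (starRingEnd ℂ) (deriv zm 0)) →
      (y 0 = φ₁ ∧ deriv y 0 = φ₂ / (ε:ℂ)^2)) := by
  intro y
  have hε0 : (ε : ℂ) ≠ 0 := by exact_mod_cast hε.ne'
  set c : ℂ := Complex.I / (ε:ℂ)^2 with hc
  have hcc : (ε:ℂ)^2 * c = Complex.I := by rw [hc]; field_simp
  have hc2 : (ε:ℂ)^2 * c^2 = -(1/(ε:ℂ)^2) := by
    rw [hc, div_pow, Complex.I_sq]; field_simp
  have hzp1 : Differentiable ℝ zp := hzp.differentiable two_ne_zero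
  have hzm1 : Differentiable ℝ zm := hzm.differentiable two_ne_zero
  have hr1 : Differentiable ℝ r := hr.differentiable two_ne_zero
  have hzp2 : Differentiable ℝ (deriv zp) := deriv_differentiable_of_contDiff2 zp hzp
  have hzm2 : Differentiable ℝ (deriv zm) := deriv_differentiable_of_contDiff2 zm hzm
  have hr2 : Differentiable ℝ (deriv r) := deriv_differentiable_of_contDiff2 r hr
  have hyY : y = fun s : ℝ =>
      Complex.exp (c * s) * zp s + Complex.exp (-c * s) * star (zm s) + r s := by
    funext s
    have e1 : Complex.I * (s:ℂ) / (ε:ℂ)^2 = c * s := by rw [hc]; ring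
    have e2 : -(Complex.I * (s:ℂ)) / (ε:ℂ)^2 = -c * s := by rw [hc]; ring
    show Complex.exp (Complex.I * (s:ℂ) / (ε:ℂ)^2) * zp s
        + Complex.exp (-(Complex.I * (s:ℂ)) / (ε:ℂ)^2) * (starRingEnd ℂ) (zm s) + r s = _
    rw [e1, e2, starRingEnd_apply]
  have hY1 : ∀ s : ℝ, HasDerivAt y
      (c * Complex.exp (c * s) * zp s + Complex.exp (c * s) * deriv zp s
        + (-c) * Complex.exp (-c * s) * star (zm s)
        + Complex.exp (-c * s) * star (deriv zm s) + deriv r s) s := by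
    intro s
    rw [hyY]
    have h1 := (hasDerivAt_cexp_mul c s).mul ((hzp1 s).hasDerivAt)
    have h2 := (hasDerivAt_cexp_mul (-c) s).mul (((hzm1 s).hasDerivAt).star)
    have h3 := (hr1 s).hasDerivAt
    convert (h1.add h2).add h3 using 1
    case e'_9 => ring
    all_goals rfl
  have hd1 : deriv y = fun s : ℝ =>
      c * Complex.exp (c * s) * zp s + Complex.exp (c * s) * deriv zp s
        + (-c) * Complex.exp (-c * s) * star (zm s)
        + Complex.exp (-c * s) * star (deriv zm s) + deriv r s :=
    funext fun s => (hY1 s).deriv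
  have hY2 : ∀ s : ℝ, HasDerivAt (deriv y)
      (c^2 * Complex.exp (c * s) * zp s + 2 * c * Complex.exp (c * s) * deriv zp s
        + Complex.exp (c * s) * deriv (deriv zp) s
        + c^2 * Complex.exp (-c * s) * star (zm s)
        + (-(2*c)) * Complex.exp (-c * s) * star (deriv zm s)
        + Complex.exp (-c * s) * star (deriv (deriv zm) s)
        + deriv (deriv r) s) s := by
    intro s
    rw [hd1]
    have t1 := ((hasDerivAt_cexp_mul c s).const_mul c).mul ((hzp1 s).hasDerivAt)
    have t2 := (hasDerivAt_cexp_mul c s).mul ((hzp2 s).hasDerivAt)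
    have t3 := ((hasDerivAt_cexp_mul (-c) s).const_mul (-c)).mul (((hzm1 s).hasDerivAt).star)
    have t4 := (hasDerivAt_cexp_mul (-c) s).mul (((hzm2 s).hasDerivAt).star)
    have t5 := (hr2 s).hasDerivAt
    convert (((t1.add t2).add t3).add t4).add t5 using 1
    case e'_9 => ring
    all_goals rfl
  constructor
  · intro s hs
    have hd2 : deriv (deriv y) s = c^2 * Complex.exp (c * s) * zp s
        + 2 * c * Complex.exp (c * s) * deriv zp s
        + Complex.exp (c * s) * deriv (deriv zp) s
        + c^2 * Complex.exp (-c * s) * star (zm s)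
        + (-(2*c)) * Complex.exp (-c * s) * star (deriv zm s)
        + Complex.exp (-c * s) * star (deriv (deriv zm) s)
        + deriv (deriv r) s := (hY2 s).deriv
    have hys : y s = Complex.exp (c * s) * zp s + Complex.exp (-c * s) * star (zm s) + r s := by
      rw [hyY]
    have hm' : -(2 * Complex.I) * star (deriv zm s) + (ε:ℂ)^2 * star (deriv (deriv zm) s)
        + (α:ℂ) * star (zm s) + star (fminus f (zp s) (zm s)) = 0 := by
      have h0 := congrArg (starRingEnd ℂ) (hodem s hs)
      simp only [map_add, map_mul, map_zero, map_pow, map_ofNat, Complex.conj_I,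
        Complex.conj_ofReal] at h0
      simp only [starRingEnd_apply] at h0
      linear_combination h0
    have hfr := hoder s hs
    rw [frem] at hfr
    have e1 : Complex.I * (s:ℂ) / (ε:ℂ)^2 = c * s := by rw [hc]; ring
    have e2 : -(Complex.I * (s:ℂ)) / (ε:ℂ)^2 = -c * s := by rw [hc]; ring
    rw [e1, e2, starRingEnd_apply, starRingEnd_apply] at hfr
    rw [hd2, hys]
    linear_combination Complex.exp (c * s) * (hodep s hs) + Complex.exp (-c * s) * hm' + hfr
      + (2 * Complex.exp (c * s) * deriv zp s - 2 * Complex.exp (-c * s) * star (deriv zm s)) * hcc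
      + (Complex.exp (c * s) * zp s + Complex.exp (-c * s) * star (zm s)) * hc2
  · rintro ⟨hp0, hm0, hr0, hr'0⟩
    have hsm0 : star (zm 0) = (φ₁ + Complex.I * φ₂) / 2 := by
      rw [hm0]
      simp only [star_div₀, star_sub, star_mul', Complex.star_def, Complex.conj_I,
        Complex.conj_conj, map_ofNat]
      ring
    constructor
    · have hys : y 0 = zp 0 + star (zm 0) + r 0 := by
        rw [hyY]; simp
      rw [hys, hp0, hsm0, hr0]
      ring
    · have hdy : deriv y 0 = c * zp 0 + deriv zp 0 + (-c) * star (zm 0)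
          + star (deriv zm 0) + deriv r 0 := by
        have := (hY1 0).deriv
        simpa using this
      rw [hdy, hp0, hsm0, hr'0, starRingEnd_apply]
      have hI : Complex.I ^ 2 = -1 := Complex.I_sq
      rw [hc]
      field_simp
      linear_combination (-2:ℂ) * φ₂ * hI
end

section
/- There is an absolute constant C>0 with the following property. Let 0<ε≤1 and α≥0 satisfy ε²α ≤ 7, set ω = √(1+ε²α)/ε², let k≥1 be an integer and s>0. Then for every G∈C¹([0,s],ℂ): | ∫₀^s (sin(ω(s−θ))/(ε²ω))·e^{i(2k+1)θ/ε²}·G(θ) dθ | ≤ C·ε²·(1+s)·( sup_{[0,s]}|G| + sup_{[0,s]}|G'| ). The constant C is independent of ε, α, k and s. -/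
set_option maxHeartbeats 1000000

open Complex

lemma osc_scalar_id (ε r a S Co : ℝ) (hε : ε ≠ 0) (hr : r ≠ 0) (hD : r^2 - a^2 ≠ 0) :
    ((S/r : ℝ):ℂ) =
    ((ε^2/(r^2-a^2) : ℝ):ℂ) * (Complex.I * (a:ℂ) / (ε:ℂ)^2) * ((Co:ℂ) + Complex.I * (a:ℂ) / (r:ℂ) * (S:ℂ))
    + ((ε^2/(r^2-a^2) : ℝ):ℂ) * (((r/ε^2*S : ℝ):ℂ) + Complex.I * (a:ℂ) / (r:ℂ) * ((-(r/ε^2*Co) : ℝ):ℂ)) := by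
  have hεc : ((ε:ℂ)) ≠ 0 := Complex.ofReal_ne_zero.mpr hε
  have hrc : ((r:ℂ)) ≠ 0 := Complex.ofReal_ne_zero.mpr hr
  have hε2 : ((ε:ℂ))^2 ≠ 0 := pow_ne_zero 2 hεc
  have hDc : ((r:ℂ))^2 - ((a:ℂ))^2 ≠ 0 := by
    have := Complex.ofReal_ne_zero.mpr hD; push_cast at this; convert this using 1
  set c : ℂ := (ε:ℂ)^2/((r:ℂ)^2-(a:ℂ)^2) with hc
  have hII : (Complex.I * (a:ℂ) / (ε:ℂ)^2) * (Complex.I * (a:ℂ) / (r:ℂ))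
      = -((a:ℂ)^2/((ε:ℂ)^2*(r:ℂ))) := by
    have h : (Complex.I * (a:ℂ) / (ε:ℂ)^2) * (Complex.I * (a:ℂ) / (r:ℂ))
        = (Complex.I*Complex.I) * ((a:ℂ)*(a:ℂ)/((ε:ℂ)^2*(r:ℂ))) := by ring
    rw [h, Complex.I_mul_I]; ring
  have hco : (Complex.I * (a:ℂ) / (r:ℂ)) * ((r:ℂ)/(ε:ℂ)^2) = Complex.I * (a:ℂ) / (ε:ℂ)^2 := by
    field_simp
  have hkey : c*((r:ℂ)/(ε:ℂ)^2) - c*((a:ℂ)^2/((ε:ℂ)^2*(r:ℂ))) = 1/(r:ℂ) := by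
    have h1 : (r:ℂ)/(ε:ℂ)^2 - (a:ℂ)^2/((ε:ℂ)^2*(r:ℂ)) = ((r:ℂ)^2-(a:ℂ)^2)/((ε:ℂ)^2*(r:ℂ)) := by
      rw [div_sub_div _ _ hε2 (mul_ne_zero hε2 hrc), div_eq_div_iff
        (mul_ne_zero hε2 (mul_ne_zero hε2 hrc)) (mul_ne_zero hε2 hrc)]
      ring
    rw [hc, ← mul_sub, h1, div_mul_div_comm, mul_comm ((ε:ℂ)^2) ((r:ℂ)^2-(a:ℂ)^2),
      mul_div_mul_left _ _ hDc, div_eq_div_iff (mul_ne_zero hε2 hrc) hrc]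
    ring
  push_cast
  have expand : c * (Complex.I * (a:ℂ) / (ε:ℂ)^2) * ((Co:ℂ) + Complex.I * (a:ℂ) / (r:ℂ) * (S:ℂ))
      + c * (((r:ℂ)/(ε:ℂ)^2*(S:ℂ)) + Complex.I * (a:ℂ) / (r:ℂ) * (-((r:ℂ)/(ε:ℂ)^2*(Co:ℂ))))
      = (c * ((Complex.I * (a:ℂ) / (ε:ℂ)^2) * (Complex.I * (a:ℂ) / (r:ℂ)))) * (S:ℂ)
        + (c * ((r:ℂ)/(ε:ℂ)^2)) * (S:ℂ)
        + (c * (Complex.I * (a:ℂ) / (ε:ℂ)^2)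
           - c * ((Complex.I * (a:ℂ) / (r:ℂ)) * ((r:ℂ)/(ε:ℂ)^2))) * (Co:ℂ) := by ring
  rw [expand, hII, hco]
  rw [show (c * -((a:ℂ)^2/((ε:ℂ)^2*(r:ℂ)))) * (S:ℂ) + (c * ((r:ℂ)/(ε:ℂ)^2)) * (S:ℂ)
      + (c * (Complex.I * (a:ℂ) / (ε:ℂ)^2) - c * (Complex.I * (a:ℂ) / (ε:ℂ)^2)) * (Co:ℂ)
      = (c*((r:ℂ)/(ε:ℂ)^2) - c*((a:ℂ)^2/((ε:ℂ)^2*(r:ℂ)))) * (S:ℂ) from by ring, hkey]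
  ring

/-- nonresonant oscillatory-integral estimate. -/
theorem nonresonant_oscillatory_integral_estimate :
    ∃ C : ℝ, 0 < C ∧
      ∀ (ε α : ℝ) (k : ℕ) (s : ℝ) (G : ℝ → ℂ),
        0 < ε → ε ≤ 1 → 0 ≤ α → ε^2 * α ≤ 7 → 1 ≤ k → 0 < s →
        ContDiff ℝ 1 G →
        ‖∫ θ in (0:ℝ)..s,
            ((Real.sin ((Real.sqrt (1 + ε^2*α) / ε^2) * (s - θ))
                / (ε^2 * (Real.sqrt (1 + ε^2*α) / ε^2)) : ℝ) : ℂ)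
              * Complex.exp (Complex.I * ((2*(k:ℝ) + 1 : ℝ) : ℂ) * (θ:ℂ) / (ε:ℂ)^2)
              * G θ‖
          ≤ C * ε^2 * (1 + s) *
            ((⨆ θ : Set.Icc (0:ℝ) s, ‖G θ.1‖) + (⨆ θ : Set.Icc (0:ℝ) s, ‖deriv G θ.1‖)) := by
  refine ⟨8, by norm_num, ?_⟩
  intro ε α k s G hε hε1 hα h7 hk hs hG
  have hεne : ε ≠ 0 := ne_of_gt hε
  -- basic quantities
  set r : ℝ := Real.sqrt (1 + ε^2*α) with hrdef
  have hr2 : r^2 = 1 + ε^2*α := Real.sq_sqrt (by positivity)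
  have hr1 : 1 ≤ r := by
    nlinarith [Real.sqrt_nonneg (1 + ε^2*α), hr2]
  have hrpos : 0 < r := lt_of_lt_of_le one_pos hr1
  have hr8 : r^2 ≤ 8 := by rw [hr2]; linarith
  set a : ℝ := 2*(k:ℝ) + 1 with hadef
  have ha3 : 3 ≤ a := by
    have : (1:ℝ) ≤ (k:ℝ) := by exact_mod_cast hk
    simp only [hadef]; linarith
  have hDpos : 1 ≤ a^2 - r^2 := by nlinarith
  have hDne : r^2 - a^2 ≠ 0 := by nlinarith
  set ω : ℝ := r / ε^2 with hωdef
  have hωr : ε^2 * ω = r := by rw [hωdef]; field_simp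
  -- pieces
  set E : ℝ → ℂ := fun θ => Complex.exp (Complex.I * ((a:ℝ):ℂ) * (θ:ℂ) / (ε:ℂ)^2) with hEdef
  set P : ℝ → ℂ := fun θ =>
      ((Real.cos (ω*(s-θ)) : ℝ) : ℂ) + Complex.I * (a:ℂ) / (r:ℂ) * ((Real.sin (ω*(s-θ)) : ℝ) : ℂ)
    with hPdef
  set T : ℝ → ℂ := fun θ => ((ε^2 / (r^2 - a^2) : ℝ) : ℂ) * E θ * P θ with hTdef
  set vd : ℝ → ℂ := fun θ => ((Real.sin (ω*(s-θ)) / r : ℝ) : ℂ) * E θ with hvd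
  have hEnorm : ∀ θ : ℝ, ‖E θ‖ = 1 := by
    intro θ
    have h : Complex.I * ((a:ℝ):ℂ) * (θ:ℂ) / (ε:ℂ)^2 = ((a*θ/ε^2 : ℝ):ℂ) * Complex.I := by
      push_cast; ring
    rw [hEdef]; simp only [h]
    exact Complex.norm_exp_ofReal_mul_I _
  -- derivative of T
  have hTd : ∀ θ : ℝ, HasDerivAt T (vd θ) θ := by
    intro θ
    have hθc : HasDerivAt (fun t : ℝ => (t:ℂ)) 1 θ := by
      simpa using (hasDerivAt_id θ).ofReal_comp
    have hEd : HasDerivAt E (E θ * (Complex.I * (a:ℂ) / (ε:ℂ)^2)) θ := by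
      have h1 : HasDerivAt (fun t : ℝ => Complex.I * ((a:ℝ):ℂ) * (t:ℂ) / (ε:ℂ)^2)
          (Complex.I * (a:ℂ) / (ε:ℂ)^2) θ := by
        simpa [mul_comm, mul_assoc, mul_div_assoc] using
          ((hθc.const_mul (Complex.I * ((a:ℝ):ℂ))).div_const ((ε:ℂ)^2))
      simpa [hEdef] using h1.cexp
    have hin : HasDerivAt (fun t : ℝ => ω*(s-t)) (-ω) θ := by
      simpa using ((hasDerivAt_id θ).const_sub s).const_mul ω
    have hcosR : HasDerivAt (fun t : ℝ => Real.cos (ω*(s-t))) (ω * Real.sin (ω*(s-θ))) θ := by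
      have := (Real.hasDerivAt_cos (ω*(s-θ))).comp θ hin
      simpa [Function.comp_def, mul_comm] using this
    have hsinR : HasDerivAt (fun t : ℝ => Real.sin (ω*(s-t))) (-(ω * Real.cos (ω*(s-θ)))) θ := by
      have := (Real.hasDerivAt_sin (ω*(s-θ))).comp θ hin
      simpa [Function.comp_def, mul_comm] using this
    have hcos : HasDerivAt (fun t : ℝ => ((Real.cos (ω*(s-t)) : ℝ):ℂ))
        (((ω * Real.sin (ω*(s-θ)) : ℝ):ℂ)) θ := hcosR.ofReal_comp
    have hsin : HasDerivAt (fun t : ℝ => ((Real.sin (ω*(s-t)) : ℝ):ℂ))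
        (((-(ω * Real.cos (ω*(s-θ))) : ℝ):ℂ)) θ := hsinR.ofReal_comp
    have hPd : HasDerivAt P
        (((ω * Real.sin (ω*(s-θ)) : ℝ):ℂ)
          + Complex.I * (a:ℂ) / (r:ℂ) * ((-(ω * Real.cos (ω*(s-θ))) : ℝ):ℂ)) θ :=
      hcos.add (hsin.const_mul (Complex.I * (a:ℂ) / (r:ℂ)))
    have hprod := (hEd.const_mul (((ε^2 / (r^2 - a^2) : ℝ) : ℂ))).mul hPd
    have hT : HasDerivAt T
        (((ε^2 / (r^2 - a^2) : ℝ) : ℂ) * (E θ * (Complex.I * (a:ℂ) / (ε:ℂ)^2)) * P θ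
          + ((ε^2 / (r^2 - a^2) : ℝ) : ℂ) * E θ *
            (((ω * Real.sin (ω*(s-θ)) : ℝ):ℂ)
              + Complex.I * (a:ℂ) / (r:ℂ) * ((-(ω * Real.cos (ω*(s-θ))) : ℝ):ℂ))) θ := hprod
    convert hT using 1
    rw [hvd, hPdef]
    simp only [hωdef]
    rw [osc_scalar_id ε r a (Real.sin (r/ε^2*(s-θ))) (Real.cos (r/ε^2*(s-θ)))
      hεne (ne_of_gt hrpos) hDne]
    ring
  -- norm bound for T
  have hTbound : ∀ θ : ℝ, ‖T θ‖ ≤ 4 * ε^2 := by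
    intro θ
    have hPb : ‖P θ‖ ≤ 1 + a / r := by
      rw [hPdef]
      refine (norm_add_le _ _).trans ?_
      have h1 : ‖((Real.cos (ω*(s-θ)) : ℝ):ℂ)‖ ≤ 1 := by
        rw [Complex.norm_real, Real.norm_eq_abs]; exact Real.abs_cos_le_one _
      have h2 : ‖Complex.I * (a:ℂ) / (r:ℂ) * ((Real.sin (ω*(s-θ)) : ℝ):ℂ)‖ ≤ a / r := by
        rw [norm_mul, norm_div, norm_mul]
        simp only [Complex.norm_I, one_mul, Complex.norm_real, Real.norm_eq_abs]
        rw [_root_.abs_of_nonneg (by linarith : (0:ℝ) ≤ a), _root_.abs_of_pos hrpos]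
        have hsle : |Real.sin (ω*(s-θ))| ≤ 1 := Real.abs_sin_le_one _
        calc a / r * |Real.sin (ω*(s-θ))| ≤ a / r * 1 :=
              mul_le_mul_of_nonneg_left hsle (by positivity)
          _ = a / r := mul_one _
      linarith
    have hcc : ‖((ε^2 / (r^2 - a^2) : ℝ) : ℂ)‖ = ε^2 / (a^2 - r^2) := by
      rw [Complex.norm_real, Real.norm_eq_abs, abs_div,
        _root_.abs_of_pos (by positivity : (0:ℝ) < ε^2),
        _root_.abs_of_neg (by nlinarith : r^2 - a^2 < 0)]
      ring_nf
    rw [hTdef]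
    simp only []
    rw [norm_mul, norm_mul, hEnorm θ, mul_one, hcc]
    have hnn : (0:ℝ) ≤ ε^2 / (a^2 - r^2) := by positivity
    have hDgt : (0:ℝ) < a^2 - r^2 := by nlinarith
    calc ε^2 / (a^2 - r^2) * ‖P θ‖ ≤ ε^2 / (a^2 - r^2) * (1 + a / r) :=
          mul_le_mul_of_nonneg_left hPb hnn
      _ ≤ 4 * ε^2 := by
          rw [div_mul_eq_mul_div, div_le_iff₀ hDgt]
          have hra : r + a ≤ 4 * (a^2 - r^2) * r := by
            nlinarith [mul_nonneg (sub_nonneg.mpr hr1)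
                (show (0:ℝ) ≤ 4*a^2 - 33 by nlinarith),
              mul_nonneg hrpos.le (show (0:ℝ) ≤ 8 - r^2 by linarith),
              mul_nonneg (sub_nonneg.mpr ha3) (show (0:ℝ) ≤ 4*a + 11 by linarith)]
          have h1ar : 1 + a / r = (r + a) / r := by field_simp
          have h2ar : (r + a) / r ≤ 4 * (a^2 - r^2) := by
            rw [div_le_iff₀ hrpos]; linarith
          have hfin : 1 + a / r ≤ 4 * (a^2 - r^2) := h1ar ▸ h2ar
          nlinarith [sq_nonneg ε]
  -- sup bounds
  have hne : (Set.Icc (0:ℝ) s).Nonempty := ⟨0, le_refl 0, hs.le⟩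
  haveI : Nonempty (Set.Icc (0:ℝ) s) := hne.to_subtype
  set M : ℝ := ⨆ θ : Set.Icc (0:ℝ) s, ‖G θ.1‖ with hM
  set M' : ℝ := ⨆ θ : Set.Icc (0:ℝ) s, ‖deriv G θ.1‖ with hM'
  have hrange : ∀ (F : ℝ → ℂ), Continuous F →
      BddAbove (Set.range fun θ : Set.Icc (0:ℝ) s => ‖F θ.1‖) := by
    intro F hF
    rw [← Set.image_eq_range (fun x => ‖F x‖) (Set.Icc (0:ℝ) s)]
    exact (isCompact_Icc.image_of_continuousOn (hF.norm.continuousOn)).bddAbove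
  have hGc : Continuous G := hG.continuous
  have hG'c : Continuous (deriv G) := hG.continuous_deriv le_rfl
  have hbddG := hrange G hGc
  have hbddG' := hrange (deriv G) hG'c
  have hGle : ∀ θ ∈ Set.Icc (0:ℝ) s, ‖G θ‖ ≤ M := fun θ hθ =>
    le_ciSup hbddG (⟨θ, hθ⟩ : Set.Icc (0:ℝ) s)
  have hG'le : ∀ θ ∈ Set.Icc (0:ℝ) s, ‖deriv G θ‖ ≤ M' := fun θ hθ =>
    le_ciSup hbddG' (⟨θ, hθ⟩ : Set.Icc (0:ℝ) s)
  have hMnn : 0 ≤ M := le_trans (norm_nonneg _) (hGle 0 ⟨le_refl 0, hs.le⟩)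
  have hM'nn : 0 ≤ M' := le_trans (norm_nonneg _) (hG'le 0 ⟨le_refl 0, hs.le⟩)
  -- integration by parts
  have hGd : ∀ x ∈ Set.uIcc (0:ℝ) s, HasDerivAt G (deriv G x) x := fun x _ =>
    (hG.differentiable one_ne_zero x).hasDerivAt
  have hTd' : ∀ x ∈ Set.uIcc (0:ℝ) s, HasDerivAt T (vd x) x := fun x _ => hTd x
  have hvdcont : Continuous vd := by
    rw [hvd]
    apply Continuous.mul
    · exact Complex.continuous_ofReal.comp (by fun_prop)
    · rw [hEdef]
      apply Complex.continuous_exp.comp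
      fun_prop
  have hint1 : IntervalIntegrable (deriv G) MeasureTheory.volume 0 s :=
    hG'c.intervalIntegrable 0 s
  have hint2 : IntervalIntegrable vd MeasureTheory.volume 0 s :=
    hvdcont.intervalIntegrable 0 s
  have hIBP := intervalIntegral.integral_mul_deriv_eq_deriv_mul hGd hTd' hint1 hint2
  -- rewrite the integrand
  have heq : (∫ θ in (0:ℝ)..s,
        ((Real.sin (ω * (s - θ)) / (ε^2 * ω) : ℝ) : ℂ)
          * Complex.exp (Complex.I * ((a:ℝ) : ℂ) * (θ:ℂ) / (ε:ℂ)^2) * G θ)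
      = ∫ θ in (0:ℝ)..s, G θ * vd θ := by
    apply intervalIntegral.integral_congr
    intro θ _
    rw [hvd, hωr]
    simp only [hEdef]
    ring
  rw [heq, hIBP]
  -- final estimate
  have hlast : ‖∫ θ in (0:ℝ)..s, deriv G θ * T θ‖ ≤ (M' * (4 * ε^2)) * |s - 0| := by
    apply intervalIntegral.norm_integral_le_of_norm_le_const
    intro θ hθ
    rw [Set.uIoc_of_le hs.le] at hθ
    rw [norm_mul]
    exact mul_le_mul (hG'le θ ⟨hθ.1.le, hθ.2⟩) (hTbound θ) (norm_nonneg _) hM'nn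
  have h1 : ‖G s * T s‖ ≤ M * (4 * ε^2) := by
    rw [norm_mul]
    exact mul_le_mul (hGle s ⟨hs.le, le_refl s⟩) (hTbound s) (norm_nonneg _) hMnn
  have h2 : ‖G 0 * T 0‖ ≤ M * (4 * ε^2) := by
    rw [norm_mul]
    exact mul_le_mul (hGle 0 ⟨le_refl 0, hs.le⟩) (hTbound 0) (norm_nonneg _) hMnn
  calc ‖G s * T s - G 0 * T 0 - ∫ θ in (0:ℝ)..s, deriv G θ * T θ‖
      ≤ ‖G s * T s - G 0 * T 0‖ + ‖∫ θ in (0:ℝ)..s, deriv G θ * T θ‖ := norm_sub_le _ _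
    _ ≤ (‖G s * T s‖ + ‖G 0 * T 0‖) + ‖∫ θ in (0:ℝ)..s, deriv G θ * T θ‖ := by
        gcongr; exact norm_sub_le _ _
    _ ≤ (M * (4 * ε^2) + M * (4 * ε^2)) + (M' * (4 * ε^2)) * |s - 0| := by
        gcongr
    _ ≤ 8 * ε^2 * (1 + s) * (M + M') := by
        rw [sub_zero, _root_.abs_of_pos hs]
        nlinarith [sq_nonneg ε, mul_nonneg hM'nn hs.le, mul_nonneg hMnn hs.le,
          mul_nonneg (mul_nonneg hMnn hs.le) (sq_nonneg ε),
          mul_nonneg (mul_nonneg hM'nn hs.le) (sq_nonneg ε),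
          mul_nonneg hMnn (sq_nonneg ε), mul_nonneg hM'nn (sq_nonneg ε)]
end

section
/- Let 0<ε≤1, α≥0, λ∈ℝ, p∈ℕ₀, g(ρ)=λρ^p, and let C₀>0. Set K₁ = sup_{0≤ρ≤(2C₀+4)²} |g(ρ)|. Suppose ỹ∈C²([0,τ],ℂ) satisfies ε²ỹ''(s) + (α+1/ε²)ỹ(s) + g(|ỹ(s)|²)ỹ(s) = 0 on [0,τ] with |ỹ(0)| ≤ C₀+1 and ε²|ỹ'(0)| ≤ C₀+1. If τ·K₁·(2C₀+4) ≤ 1, then sup_{0≤s≤τ} |ỹ(s)| ≤ 2C₀+3. -/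
open Set Filter

set_option maxHeartbeats 1000000

/-- a priori bound for the auxiliary problem
  ε²ỹ'' + (α+1/ε²)ỹ + g(|ỹ|²)ỹ = 0, g(ρ) = λρ^p: if |ỹ(0)| ≤ C₀+1,
  ε²|ỹ'(0)| ≤ C₀+1 and τ·K₁·(2C₀+4) ≤ 1 with K₁ = sup_{0≤ρ≤(2C₀+4)²}|g(ρ)|,
  then sup_{[0,τ]}|ỹ| ≤ 2C₀+3. -/
theorem auxiliary_solution_bound
    (ε α lam C₀ τ : ℝ) (p : ℕ)
    (hε : 0 < ε) (hε1 : ε ≤ 1) (hα : 0 ≤ α) (hC₀ : 0 < C₀) (hτpos : 0 < τ)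
    (K₁ : ℝ)
    (hK : K₁ = ⨆ ρ : Set.Icc (0:ℝ) ((2*C₀+4)^2), |lam * (ρ.1)^p|)
    (ytil : ℝ → ℂ) (hy : ContDiff ℝ 2 ytil)
    (hode : ∀ s ∈ Set.Icc (0:ℝ) τ,
      (ε:ℂ)^2 * deriv (deriv ytil) s + ((α:ℂ) + 1/(ε:ℂ)^2) * ytil s
        + ((lam * (‖ytil s‖^2)^p : ℝ) : ℂ) * ytil s = 0)
    (h0 : ‖ytil 0‖ ≤ C₀ + 1)
    (h0' : ε^2 * ‖deriv ytil 0‖ ≤ C₀ + 1)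
    (hsmall : τ * K₁ * (2*C₀ + 4) ≤ 1) :
    ∀ s ∈ Set.Icc (0:ℝ) τ, ‖ytil s‖ ≤ 2*C₀ + 3 := by
  -- basic differentiability facts
  have hd2 : Differentiable ℝ ytil ∧ ContDiff ℝ 1 (deriv ytil) := by
    have h := (contDiff_succ_iff_deriv (n := 1)).mp (by exact_mod_cast hy)
    exact ⟨h.1, h.2.2⟩
  have hds : ∀ s, HasDerivAt ytil (deriv ytil s) s := fun s => (hd2.1 s).hasDerivAt
  have hds' : ∀ s, HasDerivAt (deriv ytil) (deriv (deriv ytil) s) s :=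
    fun s => ((hd2.2.differentiable one_ne_zero) s).hasDerivAt
  have hyc : Continuous ytil := hy.continuous
  have hyc' : Continuous (deriv ytil) := hd2.2.continuous
  -- properties of K₁
  have hbdd : BddAbove (range fun ρ : Set.Icc (0:ℝ) ((2*C₀+4)^2) => |lam * (ρ.1)^p|) := by
    refine ⟨|lam| * ((2*C₀+4)^2)^p, ?_⟩
    rintro x ⟨ρ, rfl⟩
    show |lam * (ρ.1)^p| ≤ |lam| * ((2*C₀+4)^2)^p
    rw [abs_mul, abs_pow, abs_of_nonneg ρ.2.1]
    gcongr
    · exact ρ.2.1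
    · exact ρ.2.2
  have hK₁le : ∀ ρ : ℝ, 0 ≤ ρ → ρ ≤ (2*C₀+4)^2 → |lam * ρ^p| ≤ K₁ := by
    intro ρ h1 h2
    rw [hK]
    exact le_ciSup hbdd ⟨ρ, h1, h2⟩
  have hK₁0 : 0 ≤ K₁ :=
    le_trans (abs_nonneg _) (hK₁le 0 le_rfl (by positivity))
  -- the energy
  set E : ℝ → ℝ := fun s => ε^2 * ‖deriv ytil s‖^2 + (α+1/ε^2) * ‖ytil s‖^2 with hE
  have hε2 : (0:ℝ) < ε^2 := by positivity
  have hα2 : (0:ℝ) < α + 1/ε^2 := by positivity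
  have hEnonneg : ∀ s, 0 ≤ E s := by
    intro s
    simp only [hE]
    positivity
  have hEcont : Continuous E := by
    simp only [hE]
    exact (continuous_const.mul (hyc'.norm.pow 2)).add
      (continuous_const.mul (hyc.norm.pow 2))
  -- derivative of the energy
  have hEderiv : ∀ s ∈ Set.Icc (0:ℝ) τ,
      HasDerivAt E
        (-2 * (lam * (‖ytil s‖^2)^p) * (inner ℝ (ytil s) (deriv ytil s) : ℝ)) s := by
    intro s hs
    have dA := ((hds' s).inner ℝ (hds' s)).const_mul (ε^2)
    have dB := ((hds s).inner ℝ (hds s)).const_mul (α+1/ε^2)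
    have dE := dA.add dB
    have dE' : HasDerivAt E
        (ε^2 * ((inner ℝ (deriv ytil s) (deriv (deriv ytil) s) : ℝ)
              + (inner ℝ (deriv (deriv ytil) s) (deriv ytil s) : ℝ))
        + (α+1/ε^2) * ((inner ℝ (ytil s) (deriv ytil s) : ℝ)
              + (inner ℝ (deriv ytil s) (ytil s) : ℝ))) s := by
      have h := dE
      simp only [real_inner_self_eq_norm_sq] at h
      exact h
    -- use the ODE
    have hc : (ε^2 : ℝ) • deriv (deriv ytil) s + (α+1/ε^2 : ℝ) • ytil s
        + (lam * (‖ytil s‖^2)^p : ℝ) • ytil s = 0 := by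
      have h := hode s hs
      simp only [Complex.real_smul]
      push_cast at h ⊢
      linear_combination h
    have hkey : ε^2 * (inner ℝ (deriv (deriv ytil) s) (deriv ytil s) : ℝ)
        + (α+1/ε^2) * (inner ℝ (ytil s) (deriv ytil s) : ℝ)
        + (lam * (‖ytil s‖^2)^p) * (inner ℝ (ytil s) (deriv ytil s) : ℝ) = 0 := by
      have h := congrArg (fun z : ℂ => (inner ℝ z (deriv ytil s) : ℝ)) hc
      simp only [inner_add_left, real_inner_smul_left, inner_zero_left] at h
      linear_combination h
    have c1 : (inner ℝ (deriv ytil s) (deriv (deriv ytil) s) : ℝ)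
        = (inner ℝ (deriv (deriv ytil) s) (deriv ytil s) : ℝ) := real_inner_comm _ _
    have c2 : (inner ℝ (deriv ytil s) (ytil s) : ℝ)
        = (inner ℝ (ytil s) (deriv ytil s) : ℝ) := real_inner_comm _ _
    convert dE' using 1
    linear_combination (-2 : ℝ) * hkey - ε^2 * c1 - (α+1/ε^2) * c2
  -- key a priori estimate under a bootstrap assumption
  have key : ∀ t ∈ Set.Icc (0:ℝ) τ,
      (∀ s ∈ Set.Icc (0:ℝ) t, ‖ytil s‖ ≤ 2*C₀+4) → ‖ytil t‖ ≤ 2*C₀+3 := by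
    intro t ht hb
    -- Grönwall on [0, t]
    have hgron : ∀ x ∈ Set.Icc (0:ℝ) t, ‖E x‖ ≤ gronwallBound ‖E 0‖ K₁ 0 (x - 0) := by
      apply norm_le_gronwallBound_of_norm_deriv_right_le
        (f := E)
        (f' := fun s => -2 * (lam * (‖ytil s‖^2)^p) * (inner ℝ (ytil s) (deriv ytil s) : ℝ))
      · exact hEcont.continuousOn
      · intro x hx
        exact (hEderiv x ⟨hx.1, le_trans hx.2.le ht.2⟩).hasDerivWithinAt
      · exact le_rfl
      · intro x hx
        have hyx : ‖ytil x‖ ≤ 2*C₀+4 := hb x ⟨hx.1, hx.2.le⟩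
        have hyx0 : (0:ℝ) ≤ ‖ytil x‖ := norm_nonneg _
        have hg : |lam * (‖ytil x‖^2)^p| ≤ K₁ := by
          apply hK₁le _ (by positivity)
          nlinarith
        have hinner : |(inner ℝ (ytil x) (deriv ytil x) : ℝ)| ≤ ‖ytil x‖ * ‖deriv ytil x‖ :=
          abs_real_inner_le_norm _ _
        have hAM : 2 * (‖ytil x‖ * ‖deriv ytil x‖) ≤ E x := by
          set a := ‖ytil x‖
          set b := ‖deriv ytil x‖
          have huv : (ε*b)*(a/ε) = a*b := by field_simp
          have h2 : 2*((ε*b)*(a/ε)) ≤ (ε*b)^2 + (a/ε)^2 := by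
            nlinarith [sq_nonneg (ε*b - a/ε)]
          have h3 : (a/ε)^2 = (1/ε^2)*a^2 := by
            field_simp
          have h4 : (ε*b)^2 = ε^2*b^2 := by ring
          have h5 : 2*(a*b) ≤ ε^2*b^2 + (1/ε^2)*a^2 := by
            rw [huv] at h2; rw [h3, h4] at h2; exact h2
          have h6 : 0 ≤ α * a^2 := mul_nonneg hα (sq_nonneg a)
          simp only [hE]
          nlinarith
        have hEx : ‖E x‖ = E x := by
          rw [Real.norm_eq_abs]; exact abs_of_nonneg (hEnonneg x)
        rw [hEx]
        calc ‖-2 * (lam * (‖ytil x‖^2)^p) * (inner ℝ (ytil x) (deriv ytil x) : ℝ)‖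
            = 2 * |lam * (‖ytil x‖^2)^p| * |(inner ℝ (ytil x) (deriv ytil x) : ℝ)| := by
              rw [Real.norm_eq_abs, abs_mul, abs_mul]; norm_num
          _ ≤ 2 * K₁ * (‖ytil x‖ * ‖deriv ytil x‖) := by
              apply mul_le_mul
              · nlinarith [abs_nonneg (lam * (‖ytil x‖^2)^p)]
              · exact hinner
              · exact abs_nonneg _
              · positivity
          _ = K₁ * (2 * (‖ytil x‖ * ‖deriv ytil x‖)) := by ring
          _ ≤ K₁ * E x := mul_le_mul_of_nonneg_left hAM hK₁0
          _ = K₁ * E x + 0 := by ring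
    have hEt : E t ≤ E 0 * Real.exp (K₁ * t) := by
      have h := hgron t ⟨ht.1, le_rfl⟩
      rw [gronwallBound_ε0, sub_zero, Real.norm_eq_abs, Real.norm_eq_abs,
        abs_of_nonneg (hEnonneg t), abs_of_nonneg (hEnonneg 0)] at h
      exact h
    -- unpack the energy bound
    have hAε : (1:ℝ) ≤ ε^2 * (α + 1/ε^2) := by
      have h1a : ε^2 * (1/ε^2) = 1 := by field_simp
      nlinarith
    have hE0 : E 0 ≤ (C₀+1)^2 / ε^2 + (α+1/ε^2) * (C₀+1)^2 := by
      simp only [hE]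
      have h1 : ε^2 * ‖deriv ytil 0‖^2 ≤ (C₀+1)^2 / ε^2 := by
        rw [le_div_iff₀ hε2]
        have h : (ε^2 * ‖deriv ytil 0‖)^2 ≤ (C₀+1)^2 := by
          apply sq_le_sq' _ h0'
          have hnn := mul_nonneg hε2.le (norm_nonneg (deriv ytil 0))
          linarith
        nlinarith [h]
      have h2 : (α+1/ε^2) * ‖ytil 0‖^2 ≤ (α+1/ε^2) * (C₀+1)^2 := by
        apply mul_le_mul_of_nonneg_left _ hα2.le
        nlinarith [norm_nonneg (ytil 0), h0]
      linarith
    have hexp : Real.exp (K₁ * t) ≤ Real.exp (1/4 : ℝ) := by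
      apply Real.exp_le_exp.mpr
      have h1 : K₁ * t ≤ K₁ * τ := mul_le_mul_of_nonneg_left ht.2 hK₁0
      have h2 : K₁ * τ * (2*C₀+4) ≤ 1 := by linarith [hsmall]
      have h3 : (4:ℝ) ≤ 2*C₀+4 := by linarith
      have h4 : 0 ≤ K₁ * τ := mul_nonneg hK₁0 hτpos.le
      nlinarith
    have hexp14 : Real.exp (1/4 : ℝ) ≤ 1.29 := by
      have h4 : Real.exp (1/4 : ℝ) ^ 4 = Real.exp 1 := by
        rw [← Real.exp_nat_mul]
        norm_num
      have he : Real.exp 1 < 2.7182818286 := Real.exp_one_lt_d9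
      have hp : 0 < Real.exp (1/4 : ℝ) := Real.exp_pos _
      by_contra hgt
      push_neg at hgt
      have h5 : (1.29:ℝ)^4 < Real.exp (1/4 : ℝ)^4 := by
        apply pow_lt_pow_left₀ hgt (by norm_num)
        norm_num
      rw [h4] at h5
      norm_num at h5
      linarith
    -- conclude
    have hyt : (α+1/ε^2) * ‖ytil t‖^2 ≤ E t := by
      simp only [hE]
      linarith [mul_nonneg hε2.le (sq_nonneg ‖deriv ytil t‖)]
    have hexpos : (0:ℝ) < Real.exp (K₁ * t) := Real.exp_pos _
    have h_a : (α+1/ε^2) * ‖ytil t‖^2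
        ≤ ((C₀+1)^2 / ε^2 + (α+1/ε^2) * (C₀+1)^2) * 1.29 := by
      calc (α+1/ε^2) * ‖ytil t‖^2 ≤ E t := hyt
        _ ≤ E 0 * Real.exp (K₁ * t) := hEt
        _ ≤ ((C₀+1)^2 / ε^2 + (α+1/ε^2) * (C₀+1)^2) * 1.29 := by
            apply mul_le_mul hE0 (le_trans hexp hexp14) hexpos.le
            positivity
    have hdiv : (C₀+1)^2 / ε^2 ≤ (α+1/ε^2) * (C₀+1)^2 := by
      rw [div_le_iff₀ hε2]
      nlinarith [sq_nonneg (C₀+1)]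
    have hX2 : ‖ytil t‖^2 ≤ 2*(C₀+1)^2 * 1.29 := by
      apply le_of_mul_le_mul_left _ hα2
      nlinarith [h_a, hdiv]
    nlinarith [hX2, norm_nonneg (ytil t), hC₀]
  -- bootstrap: the set where the solution is large is empty
  have hSempty : ∀ t ∈ Set.Icc (0:ℝ) τ, ‖ytil t‖ < 2*C₀+4 := by
    by_contra hcon
    push_neg at hcon
    obtain ⟨t, ht, hget⟩ := hcon
    set S : Set ℝ := Set.Icc (0:ℝ) τ ∩ {u | 2*C₀+4 ≤ ‖ytil u‖} with hSdef
    have hSclosed : IsClosed S :=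
      isClosed_Icc.inter (isClosed_le continuous_const hyc.norm)
    have hSne : S.Nonempty := ⟨t, ht, hget⟩
    have hSbdd : BddBelow S := ⟨0, fun x hx => hx.1.1⟩
    set t₀ := sInf S with ht₀def
    have ht₀S : t₀ ∈ S := hSclosed.csInf_mem hSne hSbdd
    have ht₀Icc : t₀ ∈ Set.Icc (0:ℝ) τ := ht₀S.1
    have hget₀ : 2*C₀+4 ≤ ‖ytil t₀‖ := ht₀S.2
    have hlt : ∀ s, 0 ≤ s → s < t₀ → ‖ytil s‖ < 2*C₀+4 := by
      intro s h1 h2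
      by_contra hcon2
      push_neg at hcon2
      have : t₀ ≤ s := csInf_le hSbdd ⟨⟨h1, le_trans h2.le ht₀Icc.2⟩, hcon2⟩
      linarith
    have ht₀pos : 0 < t₀ := by
      rcases lt_or_eq_of_le ht₀Icc.1 with h | h
      · exact h
      · exfalso
        rw [← h] at hget₀
        linarith
    have hle_t₀ : ‖ytil t₀‖ ≤ 2*C₀+4 := by
      have htend : Tendsto (fun s => ‖ytil s‖) (nhdsWithin t₀ (Set.Iio t₀)) (nhds ‖ytil t₀‖) :=
        Filter.Tendsto.mono_left (hyc.norm.continuousAt) nhdsWithin_le_nhds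
      apply le_of_tendsto htend
      filter_upwards [Ioo_mem_nhdsLT ht₀pos] with s hs
      exact (hlt s hs.1.le hs.2).le
    have hcontra : ‖ytil t₀‖ ≤ 2*C₀+3 := by
      apply key t₀ ht₀Icc
      intro s hs
      rcases lt_or_eq_of_le hs.2 with h | h
      · exact (hlt s hs.1 h).le
      · rw [h]; exact hle_t₀
    linarith
  intro s hs
  exact key s hs (fun u hu => (hSempty u ⟨hu.1, le_trans hu.2 hs.2⟩).le)
end

section
/- Let 0<ε≤1, α≥0, λ∈ℝ, p∈ℕ₀, g(ρ)=λρ^p, and let C₀>0. There exists a constant C>0 depending only on λ, p, α and C₀ (independent of ε and τ) with the following property: if 0<τ≤1 and y₁,y₂∈C²([0,τ],ℂ) both satisfy ε²y''(s)+(α+1/ε²)y(s)+g(|y(s)|²)y(s)=0 on [0,τ], with sup_{[0,τ]}|y₁| ≤ C₀ and sup_{[0,τ]}|y₂| ≤ 2C₀+3, then the error energy E(e,ė)=ε²|ė|²+(α+1/ε²)|e|² satisfies E(y₁(τ)−y₂(τ), y₁'(τ)−y₂'(τ)) ≤ (1+Cτ)·E(y₁(0)−y₂(0), y₁'(0)−y₂'(0)).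 -/
open Real Set

lemma pow_diff_abs_le (n : ℕ) {u v M : ℝ} (hu : 0 ≤ u) (hv : 0 ≤ v)
    (huM : u ≤ M) (hvM : v ≤ M) (hM : 1 ≤ M) :
    |u ^ n - v ^ n| ≤ n * M ^ n * |u - v| := by
  induction n with
  | zero => simp
  | succ n ih =>
    have hMn : (0:ℝ) ≤ M ^ n := pow_nonneg (by linarith) n
    have hMn' : M ^ n ≤ M ^ (n+1) := by
      calc M ^ n = 1 * M ^ n := by ring
      _ ≤ M * M ^ n := by gcongr
      _ = M ^ (n+1) := by ring
    have key : |u ^ (n+1) - v ^ (n+1)| ≤ u * |u ^ n - v ^ n| + |u - v| * v ^ n := by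
      have : u ^ (n+1) - v ^ (n+1) = u * (u ^ n - v ^ n) + (u - v) * v ^ n := by ring
      rw [this]
      calc |u * (u ^ n - v ^ n) + (u - v) * v ^ n|
          ≤ |u * (u ^ n - v ^ n)| + |(u - v) * v ^ n| := abs_add_le _ _
        _ = u * |u ^ n - v ^ n| + |u - v| * v ^ n := by
            rw [abs_mul, abs_mul, abs_of_nonneg hu, abs_of_nonneg (pow_nonneg hv n)]
    have h1 : u * |u ^ n - v ^ n| ≤ M * (n * M ^ n * |u - v|) :=
      mul_le_mul huM ih (abs_nonneg _) (by linarith)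
    have h2 : |u - v| * v ^ n ≤ |u - v| * M ^ (n+1) := by
      have : v ^ n ≤ M ^ (n+1) := le_trans (pow_le_pow_left₀ hv hvM n) hMn'
      exact mul_le_mul_of_nonneg_left this (abs_nonneg _)
    have h3 : M * (n * M ^ n * |u - v|) = n * M ^ (n+1) * |u - v| := by ring
    push_cast
    nlinarith [abs_nonneg (u - v)]

lemma lip_bound (lam : ℝ) (p : ℕ) {R : ℝ} (hR : 1 ≤ R) {a b : ℂ}
    (ha : ‖a‖ ≤ R) (hb : ‖b‖ ≤ R) :
    ‖((lam * (‖a‖^2)^p : ℝ) : ℂ) * a - ((lam * (‖b‖^2)^p : ℝ) : ℂ) * b‖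
      ≤ |lam| * (2*p+1) * (R^2)^(p+1) * ‖a - b‖ := by
  have hR0 : (0:ℝ) ≤ R := by linarith
  have hR2 : (1:ℝ) ≤ R^2 := by nlinarith
  set X : ℝ := (‖a‖^2)^p with hX
  set Y : ℝ := (‖b‖^2)^p with hY
  have hfac : ((lam * X : ℝ) : ℂ) * a - ((lam * Y : ℝ) : ℂ) * b
      = (lam : ℂ) * (((X : ℝ) : ℂ) * (a - b) + ((X - Y : ℝ) : ℂ) * b) := by
    push_cast; ring
  rw [hfac, norm_mul, Complex.norm_real, Real.norm_eq_abs]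
  have hXnn : 0 ≤ X := pow_nonneg (sq_nonneg _) p
  have haR : ‖a‖^2 ≤ R^2 := by nlinarith [norm_nonneg a]
  have hbR : ‖b‖^2 ≤ R^2 := by nlinarith [norm_nonneg b]
  have hXle : X ≤ (R^2)^p := pow_le_pow_left₀ (sq_nonneg _) haR p
  have hXYle : |X - Y| ≤ p * (R^2)^p * |‖a‖^2 - ‖b‖^2| :=
    pow_diff_abs_le p (sq_nonneg _) (sq_nonneg _) haR hbR hR2
  have hnorm2 : |‖a‖^2 - ‖b‖^2| ≤ 2*R*‖a - b‖ := by
    have h1 : |‖a‖ - ‖b‖| ≤ ‖a - b‖ := abs_norm_sub_norm_le a b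
    have h2 : ‖a‖^2 - ‖b‖^2 = (‖a‖ - ‖b‖) * (‖a‖ + ‖b‖) := by ring
    rw [h2, abs_mul, abs_of_nonneg (by positivity : (0:ℝ) ≤ ‖a‖ + ‖b‖)]
    have : ‖a‖ + ‖b‖ ≤ 2*R := by linarith
    calc |‖a‖ - ‖b‖| * (‖a‖ + ‖b‖) ≤ ‖a - b‖ * (2*R) :=
          mul_le_mul h1 this (by positivity) (norm_nonneg _)
      _ = 2*R*‖a - b‖ := by ring
  have hmain : ‖((X : ℝ) : ℂ) * (a - b) + ((X - Y : ℝ) : ℂ) * b‖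
      ≤ (R^2)^p * ‖a - b‖ + (p * (R^2)^p * (2*R*‖a - b‖)) * R := by
    calc ‖((X : ℝ) : ℂ) * (a - b) + ((X - Y : ℝ) : ℂ) * b‖
        ≤ ‖((X : ℝ) : ℂ) * (a - b)‖ + ‖((X - Y : ℝ) : ℂ) * b‖ := norm_add_le _ _
      _ = X * ‖a - b‖ + |X - Y| * ‖b‖ := by
          rw [norm_mul, norm_mul, Complex.norm_real, Complex.norm_real,
            Real.norm_eq_abs, Real.norm_eq_abs, abs_of_nonneg hXnn]
      _ ≤ (R^2)^p * ‖a - b‖ + (p * (R^2)^p * (2*R*‖a - b‖)) * R := by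
          gcongr
          · exact le_trans hXYle (by gcongr)
  have hfin : (R^2)^p * ‖a - b‖ + (p * (R^2)^p * (2*R*‖a - b‖)) * R
      ≤ (2*p+1) * (R^2)^(p+1) * ‖a - b‖ := by
    have hp1 : (R^2)^(p+1) = (R^2)^p * R^2 := by ring
    have hRp : (0:ℝ) ≤ (R^2)^p := by positivity
    rw [hp1]
    nlinarith [norm_nonneg (a - b), mul_nonneg hRp (norm_nonneg (a-b)),
      mul_nonneg (mul_nonneg (by linarith : (0:ℝ) ≤ R^2 - 1) hRp) (norm_nonneg (a-b))]
  calc |lam| * ‖((X : ℝ) : ℂ) * (a - b) + ((X - Y : ℝ) : ℂ) * b‖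
      ≤ |lam| * ((2*p+1) * (R^2)^(p+1) * ‖a - b‖) :=
        mul_le_mul_of_nonneg_left (le_trans hmain hfin) (abs_nonneg _)
    _ = |lam| * (2*p+1) * (R^2)^(p+1) * ‖a - b‖ := by ring


set_option maxHeartbeats 1000000 in
/-- stability estimate. For the model problem with pure power
  nonlinearity, there is C = C(λ,p,α,C₀) > 0, independent of ε and τ, such that for two
  solutions y₁ (bounded by C₀) and y₂ (bounded by 2C₀+3) on [0,τ], 0<τ≤1, the error
  energy E(e,ė) = ε²|ė|² + (α+1/ε²)|e|² satisfies
  E(y₁(τ)−y₂(τ), y₁'(τ)−y₂'(τ)) ≤ (1+Cτ)·E(y₁(0)−y₂(0), y₁'(0)−y₂'(0)). -/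
theorem stability_estimate
    (lam α C₀ : ℝ) (p : ℕ) (hα : 0 ≤ α) (hC₀ : 0 < C₀) :
    ∃ C : ℝ, 0 < C ∧
      ∀ (ε τ : ℝ) (y₁ y₂ : ℝ → ℂ),
        0 < ε → ε ≤ 1 → 0 < τ → τ ≤ 1 →
        ContDiff ℝ 2 y₁ → ContDiff ℝ 2 y₂ →
        (∀ s ∈ Set.Icc (0:ℝ) τ,
          (ε:ℂ)^2 * deriv (deriv y₁) s + ((α:ℂ) + 1/(ε:ℂ)^2) * y₁ s
            + ((lam * (‖y₁ s‖^2)^p : ℝ) : ℂ) * y₁ s = 0) →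
        (∀ s ∈ Set.Icc (0:ℝ) τ,
          (ε:ℂ)^2 * deriv (deriv y₂) s + ((α:ℂ) + 1/(ε:ℂ)^2) * y₂ s
            + ((lam * (‖y₂ s‖^2)^p : ℝ) : ℂ) * y₂ s = 0) →
        (∀ s ∈ Set.Icc (0:ℝ) τ, ‖y₁ s‖ ≤ C₀) →
        (∀ s ∈ Set.Icc (0:ℝ) τ, ‖y₂ s‖ ≤ 2*C₀ + 3) →
        ε^2 * ‖deriv y₁ τ - deriv y₂ τ‖^2 + (α + 1/ε^2) * ‖y₁ τ - y₂ τ‖^2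
          ≤ (1 + C*τ) * (ε^2 * ‖deriv y₁ 0 - deriv y₂ 0‖^2
              + (α + 1/ε^2) * ‖y₁ 0 - y₂ 0‖^2) := by
  set R : ℝ := 2*C₀ + 3 with hR_def
  have hR1 : (1:ℝ) ≤ R := by simp only [hR_def]; linarith
  set L : ℝ := |lam| * (2*p+1) * (R^2)^(p+1) with hL_def
  have hL0 : 0 ≤ L := by positivity
  refine ⟨L * Real.exp L + 1, by positivity, ?_⟩
  intro ε τ y₁ y₂ hε hε1 hτ hτ1 hy1 hy2 heq1 heq2 hb1 hb2
  set C : ℝ := L * Real.exp L + 1 with hC_def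
  -- basic differentiability facts
  have h2eq : (2 : WithTop ℕ∞) = 1 + 1 := by norm_num
  have hd1 : Differentiable ℝ y₁ := hy1.differentiable (by norm_num)
  have hd2 : Differentiable ℝ y₂ := hy2.differentiable (by norm_num)
  have hcd1 : ContDiff ℝ 1 (deriv y₁) := (contDiff_succ_iff_deriv.mp (h2eq ▸ hy1)).2.2
  have hcd2 : ContDiff ℝ 1 (deriv y₂) := (contDiff_succ_iff_deriv.mp (h2eq ▸ hy2)).2.2
  have hd1' : Differentiable ℝ (deriv y₁) := hcd1.differentiable (by norm_num)
  have hd2' : Differentiable ℝ (deriv y₂) := hcd2.differentiable (by norm_num)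
  have hc1'' : Continuous (deriv (deriv y₁)) := (contDiff_one_iff_deriv.mp hcd1).2
  have hc2'' : Continuous (deriv (deriv y₂)) := (contDiff_one_iff_deriv.mp hcd2).2
  -- nonlinearity difference
  set Δ : ℝ → ℂ := fun s => ((lam * (‖y₁ s‖^2)^p : ℝ) : ℂ) * y₁ s
      - ((lam * (‖y₂ s‖^2)^p : ℝ) : ℂ) * y₂ s with hΔ_def
  -- energy
  set F : ℝ → ℝ := fun s => ε^2 * (inner ℝ (deriv y₁ s - deriv y₂ s) (deriv y₁ s - deriv y₂ s) : ℝ)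
      + (α + 1/ε^2) * (inner ℝ (y₁ s - y₂ s) (y₁ s - y₂ s) : ℝ) with hF_def
  set φ : ℝ → ℝ := fun s => -2 * (inner ℝ (Δ s) (deriv y₁ s - deriv y₂ s) : ℝ) with hφ_def
  have hFnn : ∀ s, 0 ≤ F s := by
    intro s
    have h1 := real_inner_self_nonneg (x := deriv y₁ s - deriv y₂ s)
    have h2 := real_inner_self_nonneg (x := y₁ s - y₂ s)
    have hι : (0:ℝ) ≤ α + 1/ε^2 := by positivity
    simp only [hF_def]
    positivity
  have hFval : ∀ s, F s = ε^2 * ‖deriv y₁ s - deriv y₂ s‖^2 + (α + 1/ε^2) * ‖y₁ s - y₂ s‖^2 := by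
    intro s
    simp only [hF_def, real_inner_self_eq_norm_sq]
  -- F has derivative φ on Icc 0 τ
  have hF' : ∀ s ∈ Icc (0:ℝ) τ, HasDerivAt F (φ s) s := by
    intro s hs
    have hde : HasDerivAt (fun t => deriv y₁ t - deriv y₂ t)
        (deriv (deriv y₁) s - deriv (deriv y₂) s) s :=
      ((hd1' s).hasDerivAt).sub ((hd2' s).hasDerivAt)
    have he : HasDerivAt (fun t => y₁ t - y₂ t) (deriv y₁ s - deriv y₂ s) s :=
      ((hd1 s).hasDerivAt).sub ((hd2 s).hasDerivAt)
    have hraw : HasDerivAt F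
        (ε^2 * ((inner ℝ (deriv y₁ s - deriv y₂ s) (deriv (deriv y₁) s - deriv (deriv y₂) s) : ℝ)
            + (inner ℝ (deriv (deriv y₁) s - deriv (deriv y₂) s) (deriv y₁ s - deriv y₂ s) : ℝ))
          + (α + 1/ε^2) * ((inner ℝ (y₁ s - y₂ s) (deriv y₁ s - deriv y₂ s) : ℝ)
            + (inner ℝ (deriv y₁ s - deriv y₂ s) (y₁ s - y₂ s) : ℝ))) s := by
      exact (HasDerivAt.const_mul _ (hde.inner ℝ hde)).add
        (HasDerivAt.const_mul _ (he.inner ℝ he))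
    convert hraw using 1
    -- value identity via the ODE
    have hode : (ε:ℂ)^2 * (deriv (deriv y₁) s - deriv (deriv y₂) s)
        = -(((α:ℂ) + 1/(ε:ℂ)^2) * (y₁ s - y₂ s) + Δ s) := by
      have e1 := heq1 s hs
      have e2 := heq2 s hs
      simp only [hΔ_def]
      linear_combination e1 - e2
    have hsm : (inner ℝ ((ε:ℂ)^2 * (deriv (deriv y₁) s - deriv (deriv y₂) s))
        (deriv y₁ s - deriv y₂ s) : ℝ)
        = ε^2 * (inner ℝ (deriv (deriv y₁) s - deriv (deriv y₂) s) (deriv y₁ s - deriv y₂ s) : ℝ) := by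
      rw [show ((ε:ℂ)^2) * (deriv (deriv y₁) s - deriv (deriv y₂) s)
          = (ε^2 : ℝ) • (deriv (deriv y₁) s - deriv (deriv y₂) s) by
        rw [Complex.real_smul]; push_cast; ring]
      rw [real_inner_smul_left]
    have hsm2 : (inner ℝ (((α:ℂ) + 1/(ε:ℂ)^2) * (y₁ s - y₂ s)) (deriv y₁ s - deriv y₂ s) : ℝ)
        = (α + 1/ε^2) * (inner ℝ (y₁ s - y₂ s) (deriv y₁ s - deriv y₂ s) : ℝ) := by
      rw [show ((α:ℂ) + 1/(ε:ℂ)^2) * (y₁ s - y₂ s)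
          = (α + 1/ε^2 : ℝ) • (y₁ s - y₂ s) by
        rw [Complex.real_smul]; push_cast; ring]
      rw [real_inner_smul_left]
    have hA : ε^2 * (inner ℝ (deriv (deriv y₁) s - deriv (deriv y₂) s) (deriv y₁ s - deriv y₂ s) : ℝ)
        = -((α + 1/ε^2) * (inner ℝ (y₁ s - y₂ s) (deriv y₁ s - deriv y₂ s) : ℝ))
          - (inner ℝ (Δ s) (deriv y₁ s - deriv y₂ s) : ℝ) := by
      rw [← hsm, hode, inner_neg_left, inner_add_left, hsm2]
      ring
    simp only [hφ_def]
    rw [real_inner_comm (deriv y₁ s - deriv y₂ s) (deriv (deriv y₁) s - deriv (deriv y₂) s),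
      real_inner_comm (deriv y₁ s - deriv y₂ s) (y₁ s - y₂ s)]
    rw [real_inner_comm (deriv y₁ s - deriv y₂ s) (deriv (deriv y₁) s - deriv (deriv y₂) s),
      real_inner_comm (deriv y₁ s - deriv y₂ s) (y₁ s - y₂ s)] at hA
    linarith [hA]
  -- the bound |φ s| ≤ L * F s on Icc
  have hbound : ∀ s ∈ Icc (0:ℝ) τ, |φ s| ≤ L * F s := by
    intro s hs
    set de := deriv y₁ s - deriv y₂ s with hde_def
    set e := y₁ s - y₂ s with he_def
    have hΔle : ‖Δ s‖ ≤ L * ‖e‖ := by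
      have := lip_bound lam p hR1 (a := y₁ s) (b := y₂ s)
        (le_trans (hb1 s hs) (by simp only [hR_def]; linarith))
        (le_of_le_of_eq (hb2 s hs) rfl)
      simpa [hΔ_def, hL_def, he_def, mul_comm, mul_assoc] using this
    have h1 : |φ s| ≤ 2 * (‖Δ s‖ * ‖de‖) := by
      simp only [hφ_def]
      rw [abs_mul, show |(-2 : ℝ)| = 2 by norm_num]
      exact mul_le_mul_of_nonneg_left (abs_real_inner_le_norm (Δ s) de) (by norm_num)
    have h2 : ‖Δ s‖ * ‖de‖ ≤ (L * ‖e‖) * ‖de‖ :=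
      mul_le_mul_of_nonneg_right hΔle (norm_nonneg _)
    have hq : 2 * (‖e‖ * ‖de‖) ≤ ε^2 * ‖de‖^2 + 1/ε^2 * ‖e‖^2 := by
      have hcd : 2 * ((ε*‖de‖) * (‖e‖/ε)) ≤ (ε*‖de‖)^2 + (‖e‖/ε)^2 := by
        nlinarith [sq_nonneg (ε*‖de‖ - ‖e‖/ε)]
      have ha1 : (ε*‖de‖) * (‖e‖/ε) = ‖e‖ * ‖de‖ := by
        field_simp
      have ha2 : (‖e‖/ε)^2 = 1/ε^2 * ‖e‖^2 := by
        rw [div_pow]; ring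
      rw [ha1] at hcd
      rw [ha2] at hcd
      nlinarith [hcd]
    have hFge : ε^2 * ‖de‖^2 + 1/ε^2 * ‖e‖^2 ≤ F s := by
      rw [hFval s]
      have : (0:ℝ) ≤ ‖e‖^2 := sq_nonneg _
      simp only [← hde_def, ← he_def]
      nlinarith [sq_nonneg ‖e‖]
    calc |φ s| ≤ 2 * (‖Δ s‖ * ‖de‖) := h1
      _ ≤ 2 * ((L * ‖e‖) * ‖de‖) := by linarith
      _ = L * (2 * (‖e‖ * ‖de‖)) := by ring
      _ ≤ L * (ε^2 * ‖de‖^2 + 1/ε^2 * ‖e‖^2) := mul_le_mul_of_nonneg_left hq hL0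
      _ ≤ L * F s := mul_le_mul_of_nonneg_left hFge hL0
  -- continuity of F
  have hFcont : ContinuousOn F (Icc 0 τ) := by
    have : Continuous F := by
      simp only [hF_def]
      exact (continuous_const.mul ((hd1'.continuous.sub hd2'.continuous).inner
        (hd1'.continuous.sub hd2'.continuous))).add
        (continuous_const.mul ((hd1.continuous.sub hd2.continuous).inner
          (hd1.continuous.sub hd2.continuous)))
    exact this.continuousOn
  -- Gronwall
  have hgron := norm_le_gronwallBound_of_norm_deriv_right_le (f := F) (f' := φ)
    (δ := F 0) (K := L) (ε := 0) (a := 0) (b := τ) hFcont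
    (fun x hx => (hF' x (Ico_subset_Icc_self hx)).hasDerivWithinAt)
    (le_of_eq (Real.norm_of_nonneg (hFnn 0)))
    (fun x hx => by
      rw [Real.norm_eq_abs, Real.norm_of_nonneg (hFnn x)]
      have := hbound x (Ico_subset_Icc_self hx)
      linarith)
    τ (right_mem_Icc.mpr hτ.le)
  rw [gronwallBound_ε0, sub_zero, Real.norm_of_nonneg (hFnn τ)] at hgron
  -- exp bound
  have hexp : Real.exp (L * τ) ≤ 1 + C * τ := by
    have h2 : Real.exp (L*τ) * Real.exp (-(L*τ)) = 1 := by
      rw [← Real.exp_add]; simp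
    have h3 := Real.add_one_le_exp (-(L*τ))
    have h4 : Real.exp (L*τ) ≤ 1 + (L*τ) * Real.exp (L*τ) := by
      nlinarith [Real.exp_pos (L*τ), h2, h3]
    have h5 : Real.exp (L*τ) ≤ Real.exp L :=
      Real.exp_le_exp.mpr (mul_le_of_le_one_right hL0 hτ1)
    have hLτ : 0 ≤ L * τ := mul_nonneg hL0 hτ.le
    have h6 : (L*τ) * Real.exp (L*τ) ≤ (L * Real.exp L) * τ := by
      calc (L*τ) * Real.exp (L*τ) ≤ (L*τ) * Real.exp L :=
            mul_le_mul_of_nonneg_left h5 hLτ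
        _ = (L * Real.exp L) * τ := by ring
    rw [hC_def]
    have := hτ.le
    linarith
  -- combine
  have hfin : F τ ≤ (1 + C*τ) * F 0 := by
    calc F τ ≤ F 0 * Real.exp (L * τ) := hgron
      _ ≤ F 0 * (1 + C * τ) := mul_le_mul_of_nonneg_left hexp (hFnn 0)
      _ = (1 + C*τ) * F 0 := by ring
  rw [hFval τ, hFval 0] at hfin
  exact hfin
end
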